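/- Let S_Z be an orbital fuzzy iterated function system and u ∈ F*_S. Then for every x ∈ [u]^* and every y ∈ [u_x]^*, one has u_y = u_x, where u_x = lim_n Z^[n](u^x) and u_y = lim_n Z^[n](δ_y). -/

import Mathlib

open Metric Filter Topology Set

/-- The orbit of a point `x` under the family of maps `f i`:
`x` together with all images of `x` under finite compositions of the `f i`. -/
def orbitIFS {X I : Type*} (f : I → X → X) (x : X) : Set X :=
  ⋃ l : List I, {l.foldr (fun i y => f i y) x}

/-- The fractal (Hutchinson–Barnsley) operator `K ↦ ⋃ i, f i '' K`. -/
def fractalOp {X I : Type*} (f : I → X → X) (K : Set X) : Set X :=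
  ⋃ i, f i '' K

/-- Image of a fuzzy set under a map: `f(u)(y) = sup_{x ∈ f⁻¹ y} u x` (0 if empty). -/
noncomputable def fuzzyImage {X : Type*} (g : X → X) (u : X → ℝ) : X → ℝ :=
  fun y => sSup (u '' (g ⁻¹' {y}))

/-- The fuzzy Hutchinson–Barnsley operator `Z(u) = ∨ i, ρ i (f i (u))`. -/
noncomputable def Zop {X I : Type*} (f : I → X → X) (ρ : I → ℝ → ℝ) (u : X → ℝ) : X → ℝ :=
  fun y => ⨆ i, ρ i (fuzzyImage (f i) u y)

/-- The metric `d_∞(u,v) = sup_{α ∈ (0,1]} h([u]^α, [v]^α)`. -/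
noncomputable def dInfty {X : Type*} [MetricSpace X] (u v : X → ℝ) : ℝ :=
  ⨆ α : Ioc (0:ℝ) 1, hausdorffDist {x | (α:ℝ) ≤ u x} {x | (α:ℝ) ≤ v x}

/-- The support of a fuzzy set: the closure of `{x | 0 < u x}`. -/
def fsupp {X : Type*} [MetricSpace X] (u : X → ℝ) : Set X := closure {x | 0 < u x}

/-- The crisp fuzzy point `δ_s`. -/
def fdelta {X : Type*} [DecidableEq X] (s : X) : X → ℝ := fun t => if t = s then 1 else 0

/-- `u^x` : the restriction of `u` to the closure of the orbit of `w` (zero outside). -/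
noncomputable def restrictO {X I : Type*} [MetricSpace X] (f : I → X → X) (u : X → ℝ)
    (w : X) : X → ℝ :=
  (closure (orbitIFS f w)).indicator u

/-- A normal compactly supported fuzzy set (with values in `[0,1]`). -/
def IsFuzzyN {X : Type*} [MetricSpace X] (u : X → ℝ) : Prop :=
  (∀ x, u x ∈ Icc (0:ℝ) 1) ∧ (∃ x, u x = 1) ∧ IsCompact (fsupp u)

/-- An upper semicontinuous normal compactly supported fuzzy set: membership in `F*_X`. -/
def IsFuzzyStar {X : Type*} [MetricSpace X] (u : X → ℝ) : Prop :=
  IsFuzzyN u ∧ UpperSemicontinuous u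

/-- Membership in `F*_S`: for each point of positive membership there is an orbit
containing it together with a point of membership one. -/
def InFS {X I : Type*} [MetricSpace X] (f : I → X → X) (u : X → ℝ) : Prop :=
  IsFuzzyStar u ∧ ∀ x, 0 < u x → ∃ w y, x ∈ orbitIFS f w ∧ y ∈ orbitIFS f w ∧ u y = 1

/-- The orbital contraction condition. -/
def OrbitalContr {X I : Type*} [MetricSpace X] (f : I → X → X) (C : ℝ) : Prop :=
  ∀ i x, ∀ y ∈ orbitIFS f x, ∀ z ∈ orbitIFS f x, dist (f i y) (f i z) ≤ C * dist y z

/-- An admissible system of grey level maps. -/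
def Admissible {I : Type*} (ρ : I → ℝ → ℝ) : Prop :=
  (∀ i, ρ i 0 = 0) ∧ (∀ i, MonotoneOn (ρ i) (Icc (0:ℝ) 1)) ∧
  (∀ i, ∀ t ∈ Icc (0:ℝ) 1, ContinuousWithinAt (ρ i) (Ici t) t) ∧
  (∀ i, ∀ t ∈ Icc (0:ℝ) 1, ρ i t ∈ Icc (0:ℝ) 1) ∧ (∃ j, ρ j 1 = 1)

/-!
The points of positive membership of `Zⁿ(δ_a)` are finitely many and lie in the orbit of `a`,
so the suprema defining `Zⁿ⁺¹(δ_a)` are attained at preimages. Following these, the orbital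
contraction (which extends to the closure of an orbit by continuity of the `f i`) gives
`d_∞(Zⁿ δ_a, Zⁿ δ_b) ≤ Cⁿ d(a, b)` for `a, b` in the closure of one orbit. As a `d_∞`-limit of fuzzy
sets supported in `O(x)`, `u_x` has `[u_x]^* ⊆ cl O(x)`, so
`d_∞(u_y, u_x) ≤ d_∞(u_y, Zⁿ δ_y) + Cⁿ d(y, x) + d_∞(Zⁿ δ_x, u_x) → 0`; and `d_∞` separates
upper semicontinuous fuzzy sets, whose level sets are closed.
-/

open Function

section Orbit

variable {X I : Type*} {f : I → X → X}

lemma mem_orbitIFS_self (x : X) : x ∈ orbitIFS f x :=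
  mem_iUnion.2 ⟨[], rfl⟩

lemma apply_mem_orbitIFS {x p : X} (i : I) (hp : p ∈ orbitIFS f x) : f i p ∈ orbitIFS f x := by
  obtain ⟨l, rfl⟩ : ∃ l : List I, l.foldr (fun i y => f i y) x = p := by
    simpa [orbitIFS] using hp
  exact mem_iUnion.2 ⟨i :: l, rfl⟩

lemma orbitIFS_subset {a : X} {S : Set X} (ha : a ∈ S) (hS : ∀ i, MapsTo (f i) S S) :
    orbitIFS f a ⊆ S := by
  refine iUnion_subset fun l => singleton_subset_iff.2 ?_
  induction l with
  | nil => exact ha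
  | cons i l ih => exact hS i ih

lemma fractalOp_subset_orbitIFS {x : X} {K : Set X} (hK : K ⊆ orbitIFS f x) :
    fractalOp f K ⊆ orbitIFS f x :=
  iUnion_subset fun i => image_subset_iff.2 fun _ hp => apply_mem_orbitIFS i (hK hp)

lemma orbitIFS_subset_closure_orbitIFS [TopologicalSpace X] (hcont : ∀ i, Continuous (f i))
    {x a : X} (ha : a ∈ closure (orbitIFS f x)) : orbitIFS f a ⊆ closure (orbitIFS f x) :=
  orbitIFS_subset ha fun i _ hp => map_mem_closure (hcont i) hp fun _ hq => apply_mem_orbitIFS i hq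

lemma OrbitalContr.dist_le_of_mem_closure [MetricSpace X] {C : ℝ} (horb : OrbitalContr f C)
    (hcont : ∀ i, Continuous (f i)) {x p q : X} (i : I) (hp : p ∈ closure (orbitIFS f x))
    (hq : q ∈ closure (orbitIFS f x)) : dist (f i p) (f i q) ≤ C * dist p q := by
  have hclosed : IsClosed {pq : X × X | dist (f i pq.1) (f i pq.2) ≤ C * dist pq.1 pq.2} :=
    isClosed_le (by fun_prop) (by fun_prop)
  have hpq : (p, q) ∈ closure (orbitIFS f x ×ˢ orbitIFS f x) := by
    rw [closure_prod_eq]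
    exact ⟨hp, hq⟩
  exact closure_minimal (fun pq hpq => horb i x pq.1 hpq.1 pq.2 hpq.2) hclosed hpq

end Orbit

section Zop

variable {X I : Type*} {f : I → X → X} {ρ : I → ℝ → ℝ} {u : X → ℝ}

lemma fuzzyImage_mem_Icc (hu : ∀ z, u z ∈ Icc (0:ℝ) 1) (g : X → X) (y : X) :
    fuzzyImage g u y ∈ Icc (0:ℝ) 1 :=
  ⟨Real.sSup_nonneg (by rintro _ ⟨p, -, rfl⟩; exact (hu p).1),
    Real.sSup_le (by rintro _ ⟨p, -, rfl⟩; exact (hu p).2) zero_le_one⟩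

lemma le_fuzzyImage_apply (hu : ∀ z, u z ≤ 1) (g : X → X) (p : X) :
    u p ≤ fuzzyImage g u (g p) :=
  le_csSup ⟨1, by rintro _ ⟨q, -, rfl⟩; exact hu q⟩ ⟨p, rfl, rfl⟩

lemma Zop_mem_Icc (hρ : Admissible ρ) (hu : ∀ z, u z ∈ Icc (0:ℝ) 1) (y : X) :
    Zop f ρ u y ∈ Icc (0:ℝ) 1 := by
  have h i := hρ.2.2.2.1 i _ (fuzzyImage_mem_Icc hu (f i) y)
  exact ⟨Real.iSup_nonneg fun i => (h i).1, Real.iSup_le (fun i => (h i).2) zero_le_one⟩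

lemma rho_le_Zop_apply [Finite I] (hρ : Admissible ρ) (hu : ∀ z, u z ∈ Icc (0:ℝ) 1)
    (i : I) (p : X) : ρ i (u p) ≤ Zop f ρ u (f i p) :=
  (hρ.2.1 i (hu p) (fuzzyImage_mem_Icc hu (f i) (f i p))
    (le_fuzzyImage_apply (fun z => (hu z).2) (f i) p)).trans
    (show _ ≤ Zop f ρ u (f i p) from
      le_ciSup (f := fun j => ρ j (fuzzyImage (f j) u (f i p))) (finite_range _).bddAbove i)

lemma exists_Zop_eq_one [Finite I] (hρ : Admissible ρ) (hu : ∀ z, u z ∈ Icc (0:ℝ) 1)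
    (hu1 : ∃ p, u p = 1) : ∃ z, Zop f ρ u z = 1 := by
  obtain ⟨j, hj⟩ := hρ.2.2.2.2
  obtain ⟨p, hp⟩ := hu1
  refine ⟨f j p, le_antisymm (Zop_mem_Icc hρ hu _).2 ?_⟩
  simpa [hp, hj] using rho_le_Zop_apply hρ hu j p

lemma support_Zop_subset (hρ0 : ∀ i, ρ i 0 = 0) :
    support (Zop f ρ u) ⊆ fractalOp f (support u) := by
  intro z hz
  by_contra hzK
  have himg : ∀ i, u '' (f i ⁻¹' {z}) ⊆ {0} := by
    rintro i _ ⟨p, rfl, rfl⟩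
    by_contra hp
    exact hzK (mem_iUnion.2 ⟨i, p, hp, rfl⟩)
  have h0 : ∀ i, fuzzyImage (f i) u z = 0 := fun i => by
    rcases subset_singleton_iff_eq.1 (himg i) with h | h <;> simp [fuzzyImage, h]
  exact hz (by simp [Zop, h0, hρ0])

lemma exists_le_rho_of_le_Zop [Finite I] (hρ : Admissible ρ) (hu : ∀ z, u z ∈ Icc (0:ℝ) 1)
    (hfin : (support u).Finite) {α : ℝ} (hα : 0 < α) {z : X} (hz : α ≤ Zop f ρ u z) :
    ∃ i p, f i p = z ∧ 0 < u p ∧ α ≤ ρ i (u p) := by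
  obtain ⟨j, -⟩ := hρ.2.2.2.2
  have : Nonempty I := ⟨j⟩
  obtain ⟨i, hi⟩ := exists_eq_ciSup_of_finite (f := fun i => ρ i (fuzzyImage (f i) u z))
  have hαi : α ≤ ρ i (fuzzyImage (f i) u z) := hz.trans_eq hi.symm
  have hpos : 0 < fuzzyImage (f i) u z := by
    refine (fuzzyImage_mem_Icc hu (f i) z).1.lt_of_ne fun h => ?_
    rw [← h, hρ.1 i] at hαi
    exact hα.not_ge hαi
  have hne : (u '' (f i ⁻¹' {z})).Nonempty := by
    by_contra h
    rw [not_nonempty_iff_eq_empty] at h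
    simp [fuzzyImage, h] at hpos
  have hfin' : (u '' (f i ⁻¹' {z})).Finite := by
    refine ((hfin.image u).insert 0).subset ?_
    rintro _ ⟨p, -, rfl⟩
    by_cases hp : u p = 0
    · exact Or.inl hp
    · exact Or.inr ⟨p, hp, rfl⟩
  obtain ⟨p, hpz, hp⟩ := hne.csSup_mem hfin'
  refine ⟨i, p, hpz, ?_, ?_⟩
  · rw [hp]; exact hpos
  · rw [hp]; exact hαi

end Zop

section Iterates

variable {X I : Type*} [DecidableEq X] {f : I → X → X} {ρ : I → ℝ → ℝ}

lemma support_fdelta_subset (a : X) : support (fdelta a) ⊆ {a} := fun z hz => by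
  by_contra h
  exact hz (if_neg h)

lemma iterate_Zop_fdelta_mem_Icc (hρ : Admissible ρ) (a : X) (n : ℕ) (z : X) :
    (Zop f ρ)^[n] (fdelta a) z ∈ Icc (0:ℝ) 1 := by
  induction n generalizing z with
  | zero => by_cases h : z = a <;> simp [fdelta, h]
  | succ n ih =>
    rw [iterate_succ_apply']
    exact Zop_mem_Icc hρ ih z

lemma exists_iterate_Zop_fdelta_eq_one [Finite I] (hρ : Admissible ρ) (a : X) (n : ℕ) :
    ∃ z, (Zop f ρ)^[n] (fdelta a) z = 1 := by
  induction n with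
  | zero => exact ⟨a, if_pos rfl⟩
  | succ n ih =>
    rw [iterate_succ']
    exact exists_Zop_eq_one hρ (iterate_Zop_fdelta_mem_Icc hρ a n) ih

lemma finite_support_iterate_Zop_fdelta [Finite I] (hρ0 : ∀ i, ρ i 0 = 0) (a : X) (n : ℕ) :
    (support ((Zop f ρ)^[n] (fdelta a))).Finite := by
  induction n with
  | zero => exact (finite_singleton a).subset (support_fdelta_subset a)
  | succ n ih =>
    rw [iterate_succ_apply']
    exact (finite_iUnion fun i => ih.image (f i)).subset (support_Zop_subset hρ0)

lemma support_iterate_Zop_fdelta_subset (hρ0 : ∀ i, ρ i 0 = 0) (a : X) (n : ℕ) :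
    support ((Zop f ρ)^[n] (fdelta a)) ⊆ orbitIFS f a := by
  induction n with
  | zero => exact (support_fdelta_subset a).trans (singleton_subset_iff.2 (mem_orbitIFS_self a))
  | succ n ih =>
    rw [iterate_succ_apply']
    exact (support_Zop_subset hρ0).trans (fractalOp_subset_orbitIFS ih)

lemma isFuzzyN_iterate_Zop_fdelta [MetricSpace X] [Finite I] (hρ : Admissible ρ) (a : X)
    (n : ℕ) : IsFuzzyN ((Zop f ρ)^[n] (fdelta a)) :=
  ⟨iterate_Zop_fdelta_mem_Icc hρ a n, exists_iterate_Zop_fdelta_eq_one hρ a n,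
    ((finite_support_iterate_Zop_fdelta hρ.1 a n).subset fun _ hz => hz.ne').isCompact.closure⟩

variable [MetricSpace X] [Finite I] {C : ℝ}

lemma exists_dist_le_of_le_iterate_Zop_fdelta (hcont : ∀ i, Continuous (f i)) (hC0 : 0 ≤ C)
    (horb : OrbitalContr f C) (hρ : Admissible ρ) {x a b : X}
    (ha : a ∈ closure (orbitIFS f x)) (hb : b ∈ closure (orbitIFS f x)) (n : ℕ) {α : ℝ}
    (hα : 0 < α) {z : X} (hz : α ≤ (Zop f ρ)^[n] (fdelta a) z) :
    ∃ z', α ≤ (Zop f ρ)^[n] (fdelta b) z' ∧ dist z z' ≤ C ^ n * dist a b := by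
  have hsupp : ∀ {c} n, c ∈ closure (orbitIFS f x) →
      support ((Zop f ρ)^[n] (fdelta c)) ⊆ closure (orbitIFS f x) := fun n hc =>
    (support_iterate_Zop_fdelta_subset hρ.1 _ n).trans (orbitIFS_subset_closure_orbitIFS hcont hc)
  induction n generalizing α z with
  | zero =>
    obtain rfl : z = a := by_contra fun h => hα.not_ge (by simpa [fdelta, h] using hz)
    exact ⟨b, by simpa [fdelta] using hz, by simp⟩
  | succ n ih =>
    rw [iterate_succ_apply'] at hz
    obtain ⟨i, p, rfl, hp, hαp⟩ := exists_le_rho_of_le_Zop hρ (iterate_Zop_fdelta_mem_Icc hρ a n)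
      (finite_support_iterate_Zop_fdelta hρ.1 a n) hα hz
    obtain ⟨p', hpp', hdist⟩ := ih hp le_rfl
    refine ⟨f i p', ?_, ?_⟩
    · rw [iterate_succ_apply']
      calc α ≤ ρ i ((Zop f ρ)^[n] (fdelta a) p) := hαp
        _ ≤ ρ i ((Zop f ρ)^[n] (fdelta b) p') := hρ.2.1 i (iterate_Zop_fdelta_mem_Icc hρ a n p)
            (iterate_Zop_fdelta_mem_Icc hρ b n p') hpp'
        _ ≤ _ := rho_le_Zop_apply hρ (iterate_Zop_fdelta_mem_Icc hρ b n) i p'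
    · calc dist (f i p) (f i p')
          ≤ C * dist p p' := horb.dist_le_of_mem_closure hcont i (hsupp n ha hp.ne')
            (hsupp n hb (hp.trans_le hpp').ne')
        _ ≤ C * (C ^ n * dist a b) := by gcongr
        _ = C ^ (n + 1) * dist a b := by ring

lemma dInfty_iterate_Zop_fdelta_le (hcont : ∀ i, Continuous (f i)) (hC0 : 0 ≤ C)
    (horb : OrbitalContr f C) (hρ : Admissible ρ) {x a b : X}
    (ha : a ∈ closure (orbitIFS f x)) (hb : b ∈ closure (orbitIFS f x)) (n : ℕ) :
    dInfty ((Zop f ρ)^[n] (fdelta a)) ((Zop f ρ)^[n] (fdelta b)) ≤ C ^ n * dist a b := by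
  have : Nonempty (Ioc (0:ℝ) 1) := ⟨⟨1, by norm_num⟩⟩
  refine ciSup_le fun α => hausdorffDist_le_of_mem_dist (by positivity) (fun z hz => ?_)
    (fun z hz => ?_)
  · exact exists_dist_le_of_le_iterate_Zop_fdelta hcont hC0 horb hρ ha hb n α.2.1 hz
  · rw [dist_comm a b]
    exact exists_dist_le_of_le_iterate_Zop_fdelta hcont hC0 horb hρ hb ha n α.2.1 hz

end Iterates

lemma le_of_forall_level_subset {X : Type*} {u v : X → ℝ} (hu : ∀ z, u z ≤ 1) (hv : ∀ z, 0 ≤ v z)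
    (h : ∀ α ∈ Ioc (0:ℝ) 1, {z | α ≤ u z} ⊆ {z | α ≤ v z}) : u ≤ v := fun z => by
  rcases le_or_gt (u z) 0 with hz | hz
  · exact hz.trans (hv z)
  · exact h (u z) ⟨hz, hu z⟩ (le_refl (u z))

section Levels

variable {X : Type*} [MetricSpace X] {u v w : X → ℝ} {α : ℝ}

lemma IsFuzzyN.level_nonempty (hu : IsFuzzyN u) (hα : α ≤ 1) : {z | α ≤ u z}.Nonempty :=
  let ⟨p, hp⟩ := hu.2.1
  ⟨p, show α ≤ u p from hp ▸ hα⟩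

lemma level_subset_fsupp (hα : 0 < α) : {z | α ≤ u z} ⊆ fsupp u :=
  fun _ hz => subset_closure (hα.trans_le hz)

lemma IsFuzzyN.isBounded_level (hu : IsFuzzyN u) (hα : 0 < α) :
    Bornology.IsBounded {z | α ≤ u z} :=
  hu.2.2.isBounded.subset (level_subset_fsupp hα)

lemma IsFuzzyN.hausdorffEDist_level_ne_top (hu : IsFuzzyN u) (hv : IsFuzzyN v)
    (hα : α ∈ Ioc (0:ℝ) 1) : hausdorffEDist {z | α ≤ u z} {z | α ≤ v z} ≠ ⊤ :=
  hausdorffEDist_ne_top_of_nonempty_of_bounded (hu.level_nonempty hα.2)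
    (hv.level_nonempty hα.2) (hu.isBounded_level hα.1) (hv.isBounded_level hα.1)

lemma IsFuzzyN.hausdorffDist_level_le_dInfty (hu : IsFuzzyN u) (hv : IsFuzzyN v)
    (hα : α ∈ Ioc (0:ℝ) 1) : hausdorffDist {z | α ≤ u z} {z | α ≤ v z} ≤ dInfty u v := by
  refine le_ciSup (f := fun β : Ioc (0:ℝ) 1 => hausdorffDist {z | (β:ℝ) ≤ u z} {z | (β:ℝ) ≤ v z})
    ⟨diam (fsupp u ∪ fsupp v), ?_⟩ ⟨α, hα⟩
  rintro _ ⟨β, rfl⟩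
  exact (hausdorffDist_le_diam (hu.level_nonempty β.2.2) (hu.isBounded_level β.2.1)
    (hv.level_nonempty β.2.2) (hv.isBounded_level β.2.1)).trans
    (diam_mono (union_subset_union (level_subset_fsupp β.2.1) (level_subset_fsupp β.2.1))
      (hu.2.2.isBounded.union hv.2.2.isBounded))

lemma dInfty_nonneg (u v : X → ℝ) : 0 ≤ dInfty u v :=
  Real.iSup_nonneg fun _ => hausdorffDist_nonneg

lemma dInfty_comm (u v : X → ℝ) : dInfty u v = dInfty v u := by
  simp only [dInfty, hausdorffDist_comm]

lemma IsFuzzyN.dInfty_triangle (hu : IsFuzzyN u) (hv : IsFuzzyN v) (hw : IsFuzzyN w) :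
    dInfty u w ≤ dInfty u v + dInfty v w := by
  have : Nonempty (Ioc (0:ℝ) 1) := ⟨⟨1, by norm_num⟩⟩
  exact ciSup_le fun α => (hausdorffDist_triangle (hu.hausdorffEDist_level_ne_top hv α.2)).trans
    (add_le_add (hu.hausdorffDist_level_le_dInfty hv α.2) (hv.hausdorffDist_level_le_dInfty hw α.2))

lemma IsFuzzyStar.isClosed_level (hu : IsFuzzyStar u) (α : ℝ) : IsClosed {z | α ≤ u z} :=
  hu.2.isClosed_preimage α

lemma IsFuzzyStar.eq_of_dInfty_eq_zero (hu : IsFuzzyStar u) (hv : IsFuzzyStar v)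
    (h : dInfty u v = 0) : u = v := by
  have hlevel : ∀ α ∈ Ioc (0:ℝ) 1, {z | α ≤ u z} = {z | α ≤ v z} := fun α hα => by
    have h0 : hausdorffDist {z | α ≤ u z} {z | α ≤ v z} = 0 :=
      le_antisymm (h ▸ hu.1.hausdorffDist_level_le_dInfty hv.1 hα) hausdorffDist_nonneg
    rw [← (hu.isClosed_level α).closure_eq, ← (hv.isClosed_level α).closure_eq]
    exact (hausdorffDist_zero_iff_closure_eq_closure
      (hu.1.hausdorffEDist_level_ne_top hv.1 hα)).1 h0
  exact le_antisymm
    (le_of_forall_level_subset (fun z => (hu.1.1 z).2) (fun z => (hv.1.1 z).1)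
      fun α hα => (hlevel α hα).le)
    (le_of_forall_level_subset (fun z => (hv.1.1 z).2) (fun z => (hu.1.1 z).1)
      fun α hα => (hlevel α hα).ge)

lemma pos_subset_closure_of_tendsto_dInfty {u : ℕ → X → ℝ} {S : Set X} (hu : ∀ n, IsFuzzyN (u n))
    (hv : IsFuzzyN v) (hS : ∀ n, {z | 0 < u n z} ⊆ S)
    (h : Tendsto (fun n => dInfty (u n) v) atTop (𝓝 0)) : {z | 0 < v z} ⊆ closure S := by
  intro y hy
  have hα : v y ∈ Ioc (0:ℝ) 1 := ⟨hy, (hv.1 y).2⟩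
  refine Metric.mem_closure_iff.2 fun ε hε => ?_
  obtain ⟨n, hn⟩ := (h.eventually (gt_mem_nhds hε)).exists
  have hd : hausdorffDist {z | v y ≤ v z} {z | v y ≤ u n z} < ε := by
    rw [hausdorffDist_comm]
    exact ((hu n).hausdorffDist_level_le_dInfty hv hα).trans_lt hn
  obtain ⟨z, hz, hyz⟩ := exists_dist_lt_of_hausdorffDist_lt (by simp : y ∈ {z | v y ≤ v z}) hd
    (hv.hausdorffEDist_level_ne_top (hu n) hα)
  exact ⟨z, hS n (hα.1.trans_le hz), hyz⟩

end Levels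

theorem stmt7_general {X I : Type*} [MetricSpace X] [DecidableEq X]
    [Finite I]
    (f : I → X → X) (hcont : ∀ i, Continuous (f i))
    (C : ℝ) (hC0 : 0 ≤ C) (hC1 : C < 1) (horb : OrbitalContr f C)
    (ρ : I → ℝ → ℝ) (hρ : Admissible ρ)
    (x : X)
    (ux : X → ℝ) (huxStar : IsFuzzyStar ux)
    (hux : Tendsto (fun n => dInfty ((Zop f ρ)^[n] (fdelta x)) ux) atTop (nhds 0))
    (y : X) (hy : 0 < ux y)
    (uy : X → ℝ) (huyStar : IsFuzzyStar uy)
    (huy : Tendsto (fun n => dInfty ((Zop f ρ)^[n] (fdelta y)) uy) atTop (nhds 0)) :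
    uy = ux := by
  have hiter : ∀ a n, IsFuzzyN ((Zop f ρ)^[n] (fdelta a)) := isFuzzyN_iterate_Zop_fdelta hρ
  have hxD : x ∈ closure (orbitIFS f x) := subset_closure (mem_orbitIFS_self x)
  have hyD : y ∈ closure (orbitIFS f x) :=
    pos_subset_closure_of_tendsto_dInfty (hiter x) huxStar.1
      (fun n _ hz => support_iterate_Zop_fdelta_subset hρ.1 x n hz.ne') hux hy
  have hbound : ∀ n, dInfty uy ux ≤ dInfty ((Zop f ρ)^[n] (fdelta y)) uy +
      (C ^ n * dist y x + dInfty ((Zop f ρ)^[n] (fdelta x)) ux) := fun n => by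
    calc dInfty uy ux
        ≤ dInfty uy ((Zop f ρ)^[n] (fdelta y)) + dInfty ((Zop f ρ)^[n] (fdelta y)) ux :=
          huyStar.1.dInfty_triangle (hiter y n) huxStar.1
      _ ≤ dInfty ((Zop f ρ)^[n] (fdelta y)) uy + (dInfty ((Zop f ρ)^[n] (fdelta y))
            ((Zop f ρ)^[n] (fdelta x)) + dInfty ((Zop f ρ)^[n] (fdelta x)) ux) := by
          rw [dInfty_comm uy]
          gcongr
          exact (hiter y n).dInfty_triangle (hiter x n) huxStar.1
      _ ≤ _ := by grw [dInfty_iterate_Zop_fdelta_le hcont hC0 horb hρ hyD hxD n]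
  have hlim : Tendsto (fun n => dInfty ((Zop f ρ)^[n] (fdelta y)) uy +
      (C ^ n * dist y x + dInfty ((Zop f ρ)^[n] (fdelta x)) ux)) atTop (𝓝 0) := by
    simpa using huy.add (((tendsto_pow_atTop_nhds_zero_of_lt_one hC0 hC1).mul_const _).add hux)
  exact huyStar.eq_of_dInfty_eq_zero huxStar
    (le_antisymm (ge_of_tendsto' hlim hbound) (dInfty_nonneg uy ux))

/-- Proposition 3.2: `u_y = u_x` for every `x ∈ [u]^*` and
`y ∈ [u_x]^*`. -/
theorem stmt7 {X I : Type*} [MetricSpace X] [CompleteSpace X] [DecidableEq X]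
    [Finite I] [Nonempty I]
    (f : I → X → X) (hcont : ∀ i, Continuous (f i))
    (C : ℝ) (hC0 : 0 ≤ C) (hC1 : C < 1) (horb : OrbitalContr f C)
    (ρ : I → ℝ → ℝ) (hρ : Admissible ρ)
    (u : X → ℝ) (hu : InFS f u)
    (x : X) (hx : 0 < u x)
    (ux : X → ℝ) (huxStar : IsFuzzyStar ux)
    (hux : Tendsto (fun n => dInfty ((Zop f ρ)^[n] (fdelta x)) ux) atTop (nhds 0))
    (y : X) (hy : 0 < ux y)
    (uy : X → ℝ) (huyStar : IsFuzzyStar uy)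
    (huy : Tendsto (fun n => dInfty ((Zop f ρ)^[n] (fdelta y)) uy) atTop (nhds 0)) :
    uy = ux :=
  stmt7_general f hcont C hC0 hC1 horb ρ hρ x ux huxStar hux y hy uy huyStar huy
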